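/- Define Y₁(v) = v₁·(−v₃v₁, −v₃v₂, 1−v₃²) for v = (v₁,v₂,v₃) ∈ ℝ³. If γ = (γ₁, γ₂, γ₃) : ℝ → ℝ³ is differentiable with γ'(t) = Y₁(γ(t)) for all t ∈ ℝ, |γ(0)| = 1, and γ₁(0) ≠ 0, then there exists t ∈ ℝ with γ₃(t) = 0 (every non-trivial orbit of Y₁ on the unit sphere intersects the equator {v₃ = 0}). -/

import Mathlib

/-!
Along a solution write `x = γ₁` and `z = γ₃`; then `x' = -x²z` and `z' = x(1 - z²)`. For
`c = z(0)/x(0)` the function `h(t) = z(t) - (t + c)·x(t)` satisfies the linear equation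
`h' = -xz·h` with `h(0) = 0`, so `h` vanishes identically, and at `t = -c` this says `z(-c) = 0`.
-/

/-- The vector `(a,b,c)` regarded as an element of Euclidean `ℝ³`. -/
noncomputable def evec3 (a b c : ℝ) : EuclideanSpace ℝ (Fin 3) := WithLp.toLp 2 ![a, b, c]

/-- `Y₁(v) = v₁·(−v₃v₁, −v₃v₂, 1−v₃²)`. -/
noncomputable def Y1 : EuclideanSpace ℝ (Fin 3) → EuclideanSpace ℝ (Fin 3) :=
  fun v => (v 0) • evec3 (-(v 2) * v 0) (-(v 2) * v 1) (1 - (v 2) ^ 2)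

theorem HasDerivAt.euclideanSpace_apply {𝕜 ι : Type*} [RCLike 𝕜] [Fintype ι]
    {γ : 𝕜 → EuclideanSpace 𝕜 ι} {v : EuclideanSpace 𝕜 ι} {t : 𝕜} (h : HasDerivAt γ v t)
    (i : ι) : HasDerivAt (fun s => γ s i) (v i) t :=
  (EuclideanSpace.proj (𝕜 := 𝕜) i).hasFDerivAt.comp_hasDerivAt t h

theorem Y1_apply_zero (v : EuclideanSpace ℝ (Fin 3)) : Y1 v 0 = -(v 0) ^ 2 * v 2 := by
  simp only [Y1, evec3, PiLp.smul_apply, Matrix.cons_val_zero, smul_eq_mul]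
  ring

theorem Y1_apply_two (v : EuclideanSpace ℝ (Fin 3)) : Y1 v 2 = v 0 * (1 - v 2 ^ 2) := by
  simp [Y1, evec3]

theorem eq_zero_of_hasDerivAt_eq_smul {E : Type*} [NormedAddCommGroup E] [NormedSpace ℝ E]
    {f : ℝ → E} {a : ℝ → ℝ} (ha : Continuous a) (hf : ∀ t, HasDerivAt f (a t • f t) t)
    {t₀ : ℝ} (hf₀ : f t₀ = 0) (t : ℝ) : f t = 0 := by
  set A : ℝ → ℝ := fun u => ∫ s in t₀..u, a s
  have hA : ∀ u, HasDerivAt A (a u) u := fun u => ha.integral_hasStrictDerivAt t₀ u |>.hasDerivAt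
  set g : ℝ → E := fun u => Real.exp (-A u) • f u
  have hg : ∀ u, HasDerivAt g 0 u := by
    intro u
    refine ((hA u).neg.exp.smul (hf u)).congr_deriv ?_
    rw [smul_smul, ← add_smul]
    simp
  have hg_const : g t = g t₀ := is_const_of_deriv_eq_zero
    (fun u => (hg u).differentiableAt) (fun u => (hg u).deriv) t t₀
  simpa [g, hf₀, Real.exp_ne_zero] using hg_const

section Orbit

variable {γ : ℝ → EuclideanSpace ℝ (Fin 3)} (hγ : ∀ t, HasDerivAt γ (Y1 (γ t)) t)
include hγ

theorem hasDerivAt_apply_zero_of_Y1 (t : ℝ) :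
    HasDerivAt (fun s => γ s 0) (-(γ t 0) ^ 2 * γ t 2) t := by
  simpa only [Y1_apply_zero] using (hγ t).euclideanSpace_apply 0

theorem hasDerivAt_apply_two_of_Y1 (t : ℝ) :
    HasDerivAt (fun s => γ s 2) (γ t 0 * (1 - γ t 2 ^ 2)) t := by
  simpa only [Y1_apply_two] using (hγ t).euclideanSpace_apply 2

theorem hasDerivAt_sub_mul_of_Y1 (c t : ℝ) :
    HasDerivAt (fun s => γ s 2 - (s + c) * γ s 0)
      (-(γ t 0 * γ t 2) • (γ t 2 - (t + c) * γ t 0)) t := by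
  refine ((hasDerivAt_apply_two_of_Y1 hγ t).sub
    (((hasDerivAt_id t).add_const c).mul (hasDerivAt_apply_zero_of_Y1 hγ t))).congr_deriv ?_
  simp only [id, smul_eq_mul]
  ring

end Orbit

theorem statement17_general (γ : ℝ → EuclideanSpace ℝ (Fin 3))
    (hγ : ∀ t : ℝ, HasDerivAt γ (Y1 (γ t)) t) (h1 : γ 0 0 ≠ 0) :
    ∃ t : ℝ, γ t 2 = 0 := by
  set c := γ 0 2 / γ 0 0
  have hcont : Continuous fun t => -(γ t 0 * γ t 2) :=
    (continuous_iff_continuousAt.2 fun t => ((hasDerivAt_apply_zero_of_Y1 hγ t).continuousAt.mul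
      (hasDerivAt_apply_two_of_Y1 hγ t).continuousAt)).neg
  have h_at_zero : γ 0 2 - (0 + c) * γ 0 0 = 0 := by
    simp [c, div_mul_cancel₀ _ h1]
  refine ⟨-c, ?_⟩
  simpa using eq_zero_of_hasDerivAt_eq_smul hcont (hasDerivAt_sub_mul_of_Y1 hγ c) h_at_zero (-c)

/-- Every non-trivial orbit of `Y₁` on the unit sphere intersects the
equator `{v₃ = 0}`: if `γ' = Y₁(γ)` on `ℝ`, `|γ(0)| = 1` and `γ₁(0) ≠ 0`, then
`γ₃(t) = 0` for some `t`. -/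
theorem statement17 (γ : ℝ → EuclideanSpace ℝ (Fin 3))
    (hγ : ∀ t : ℝ, HasDerivAt γ (Y1 (γ t)) t) (h0 : ‖γ 0‖ = 1) (h1 : γ 0 0 ≠ 0) :
    ∃ t : ℝ, γ t 2 = 0 :=
  statement17_general γ hγ h1
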